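/- For every integer n ≥ 32, the thresholds satisfy a_n < b_n, where a_n = min{ j ∈ {2,...,n} : f_n(j) ≤ 0 } and b_n as defined. -/

import Mathlib

/-! Since the tail sums `∑_{i=j+1}^n 1/(i-2)` are bounded by `log ((n-2)/(j-2))` and
`e^{1/2} ≥ 13/8`, the index `j = ⌊2n/3⌋` already has tail sum at most `1/2`, so `3 b_n ≤ 2n`.
The defining property of `b_n` also bounds `u_n ≤ (b_n-2)(n-2) + 2n-4`, which gives
`f_n(b_n-1) ≤ (b_n-3)(3b_n-2n-2) ≤ 0`, hence `a_n ≤ b_n - 1`. -/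

open Finset

/-- The threshold `b_n = min{ j : 2 ≤ j ≤ n, ∑_{i=j+1}^n 1/(i-2) ≤ 1/2 }` (empty sum = 0). -/
noncomputable def bThresh (n : ℕ) : ℕ :=
  sInf {j : ℕ | 2 ≤ j ∧ j ≤ n ∧ ∑ i ∈ Finset.Icc (j + 1) n, (1 : ℝ) / ((i : ℝ) - 2) ≤ 1 / 2}

/-- `u_n = (b_n - 2)(2n - 4) ∑_{i=b_n}^n 1/(i-2)`. -/
noncomputable def uVal (n : ℕ) : ℝ :=
  ((bThresh n : ℝ) - 2) * (2 * (n : ℝ) - 4) *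
    ∑ i ∈ Finset.Icc (bThresh n) n, (1 : ℝ) / ((i : ℝ) - 2)

/-- `f_n(x) = 3x² - (1+4n)x + (n-2)b_n + 2(n+1) + u_n`. -/
noncomputable def fPoly (n : ℕ) (x : ℝ) : ℝ :=
  3 * x ^ 2 - (1 + 4 * (n : ℝ)) * x + ((n : ℝ) - 2) * (bThresh n : ℝ) + 2 * ((n : ℝ) + 1) + uVal n

/-- The threshold `a_n = min{ j : 2 ≤ j ≤ n, f_n(j) ≤ 0 }`. -/
noncomputable def aThresh (n : ℕ) : ℕ :=
  sInf {j : ℕ | 2 ≤ j ∧ j ≤ n ∧ fPoly n (j : ℝ) ≤ 0}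

lemma Real.one_div_add_one_le_log_add_one_sub_log {a : ℝ} (ha : 0 < a) :
    1 / (a + 1) ≤ log (a + 1) - log a := by
  have h := one_sub_inv_le_log_of_pos (div_pos (by linarith : 0 < a + 1) ha)
  rw [inv_div, log_div (by linarith) ha.ne'] at h
  have hsub : 1 - a / (a + 1) = 1 / (a + 1) := by field_simp; ring
  linarith

lemma sum_Icc_one_div_sub_le_log_sub_log {c : ℝ} {m n : ℕ} (hm : c < m) (hmn : m ≤ n) :
    ∑ i ∈ Icc (m + 1) n, 1 / ((i : ℝ) - c) ≤ Real.log (n - c) - Real.log (m - c) := by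
  induction n, hmn using Nat.le_induction with
  | base => simp
  | succ n hmn ih =>
    have hn : c < n := hm.trans_le (by exact_mod_cast hmn)
    have hstep := Real.one_div_add_one_le_log_add_one_sub_log (sub_pos.mpr hn)
    rw [sum_Icc_succ_top (by omega), Nat.cast_succ, (by ring : (n : ℝ) + 1 - c = n - c + 1)]
    linarith

lemma sum_Icc_one_div_sub_two_le_half {m n : ℕ} (hm : 3 ≤ m) (hmn : m ≤ n)
    (hratio : 8 * ((n : ℝ) - 2) ≤ 13 * ((m : ℝ) - 2)) :
    ∑ i ∈ Icc (m + 1) n, (1 : ℝ) / ((i : ℝ) - 2) ≤ 1 / 2 := by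
  have hm' : (2 : ℝ) < m := by exact_mod_cast hm
  have hn' : (2 : ℝ) < n := hm'.trans_le (by exact_mod_cast hmn)
  have hexp : (13 / 8 : ℝ) ≤ Real.exp (1 / 2) :=
    le_of_eq_of_le (by norm_num) (Real.quadratic_le_exp_of_nonneg (by norm_num))
  have hlog : Real.log (n - 2) - Real.log (m - 2) ≤ 1 / 2 := by
    rw [← Real.log_div (by linarith) (by linarith), ← Real.log_exp (1 / 2)]
    refine Real.log_le_log (by apply div_pos <;> linarith) ?_
    rw [div_le_iff₀ (by linarith)]
    nlinarith
  exact (sum_Icc_one_div_sub_le_log_sub_log hm' hmn).trans hlog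

section bThresh

variable {n : ℕ}

lemma bThresh_spec (hn : 2 ≤ n) :
    2 ≤ bThresh n ∧ bThresh n ≤ n ∧
      ∑ i ∈ Icc (bThresh n + 1) n, (1 : ℝ) / ((i : ℝ) - 2) ≤ 1 / 2 :=
  Nat.sInf_mem (s := {j | 2 ≤ j ∧ j ≤ n ∧ _}) ⟨n, hn, le_rfl, by simp⟩

lemma bThresh_le {j : ℕ} (hj : 2 ≤ j) (hjn : j ≤ n)
    (hsum : ∑ i ∈ Icc (j + 1) n, (1 : ℝ) / ((i : ℝ) - 2) ≤ 1 / 2) : bThresh n ≤ j :=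
  Nat.sInf_le (s := {j | 2 ≤ j ∧ j ≤ n ∧ _}) ⟨hj, hjn, hsum⟩

lemma three_le_bThresh (hn : 3 ≤ n) : 3 ≤ bThresh n := by
  obtain ⟨hb2, -, hsum⟩ := bThresh_spec (by omega : 2 ≤ n)
  by_contra! hb
  have hb2 : bThresh n = 2 := by omega
  rw [hb2] at hsum
  have hterm : (1 : ℝ) ≤ ∑ i ∈ Icc (2 + 1) n, (1 : ℝ) / ((i : ℝ) - 2) := by
    refine le_of_eq_of_le (by norm_num) (single_le_sum (fun i hi => ?_) (mem_Icc.mpr ⟨le_rfl, hn⟩))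
    have : (3 : ℝ) ≤ i := by exact_mod_cast (mem_Icc.mp hi).1
    exact div_nonneg zero_le_one (by linarith)
  linarith

lemma three_mul_bThresh_le (hn : 28 ≤ n) : 3 * bThresh n ≤ 2 * n := by
  have hratio : 8 * ((n : ℝ) - 2) ≤ 13 * (((2 * n / 3 : ℕ) : ℝ) - 2) := by
    have hnat : 8 * n + 10 ≤ 13 * (2 * n / 3) := by omega
    have hreal : (8 * n + 10 : ℝ) ≤ 13 * ((2 * n / 3 : ℕ) : ℝ) := by exact_mod_cast hnat
    linarith
  have hb := bThresh_le (by omega) (by omega)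
    (sum_Icc_one_div_sub_two_le_half (by omega) (by omega) hratio)
  omega

lemma uVal_le (hn : 3 ≤ n) :
    uVal n ≤ ((bThresh n : ℝ) - 2) * ((n : ℝ) - 2) + (2 * (n : ℝ) - 4) := by
  obtain ⟨-, hbn, hsum⟩ := bThresh_spec (by omega : 2 ≤ n)
  have hb : (3 : ℝ) ≤ bThresh n := by exact_mod_cast three_le_bThresh hn
  have hn' : (3 : ℝ) ≤ n := by exact_mod_cast hn
  set b := bThresh n
  have hb2 : (b : ℝ) - 2 ≠ 0 := by linarith
  have hsplit : ∑ i ∈ Icc b n, (1 : ℝ) / ((i : ℝ) - 2)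
      = 1 / ((b : ℝ) - 2) + ∑ i ∈ Icc (b + 1) n, (1 : ℝ) / ((i : ℝ) - 2) := by
    rw [← insert_Icc_add_one_left_eq_Icc hbn, sum_insert (by simp)]
  calc uVal n
      = ((b : ℝ) - 2) * (2 * (n : ℝ) - 4) *
          (1 / ((b : ℝ) - 2) + ∑ i ∈ Icc (b + 1) n, (1 : ℝ) / ((i : ℝ) - 2)) := by
        rw [uVal, hsplit]
    _ ≤ ((b : ℝ) - 2) * (2 * (n : ℝ) - 4) * (1 / ((b : ℝ) - 2) + 1 / 2) := by
        have : (0 : ℝ) ≤ ((b : ℝ) - 2) * (2 * (n : ℝ) - 4) := mul_nonneg (by linarith) (by linarith)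
        gcongr
    _ = ((b : ℝ) - 2) * ((n : ℝ) - 2) + (2 * (n : ℝ) - 4) := by
        field_simp
        ring

lemma fPoly_bThresh_sub_one_le (hn : 3 ≤ n) :
    fPoly n ((bThresh n : ℝ) - 1) ≤ ((bThresh n : ℝ) - 3) * (3 * bThresh n - 2 * n - 2) := by
  rw [fPoly]
  linear_combination uVal_le hn

end bThresh

lemma aThresh_le {n j : ℕ} (hj : 2 ≤ j) (hjn : j ≤ n) (hf : fPoly n j ≤ 0) : aThresh n ≤ j :=
  Nat.sInf_le (s := {j | 2 ≤ j ∧ j ≤ n ∧ _}) ⟨hj, hjn, hf⟩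

theorem aThresh_lt_bThresh (n : ℕ) (hn : 32 ≤ n) : aThresh n < bThresh n := by
  have hb3 := three_le_bThresh (by omega : 3 ≤ n)
  have hbn := (bThresh_spec (by omega : 2 ≤ n)).2.1
  have hb : (3 : ℝ) ≤ bThresh n := by exact_mod_cast hb3
  have h3b : 3 * (bThresh n : ℝ) ≤ 2 * n := by exact_mod_cast three_mul_bThresh_le (by omega)
  have hf : fPoly n ((bThresh n - 1 : ℕ) : ℝ) ≤ 0 := by
    rw [Nat.cast_sub (by omega), Nat.cast_one]
    exact (fPoly_bThresh_sub_one_le (by omega)).trans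
      (mul_nonpos_of_nonneg_of_nonpos (by linarith) (by linarith))
  have ha := aThresh_le (by omega) (by omega) hf
  omega
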